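/- arXiv:2605.09117 — 4 statements merged into one kernel-verified Lean document; each statement's English description precedes it below -/
import Mathlib

section
/- Let (Y_n)_{n≥1} be i.i.d. random variables with values in [0,1] and let a := E[Y_1] > 0. Then the random series Z := 1 + Σ_{n≥1} Π_{j=1}^n (1 - Y_j) is almost surely finite and E[Z] = 1/a. -/
open MeasureTheory ProbabilityTheory
open scoped ENNReal

/-!
Write `Z = ∑_{n ≥ 0} ∏_{j < n} (1 - Y j)`. By independence the `n`-th term has mean `(1 - a) ^ n`,
and the terms are nonnegative, so their `L¹` norms are summable. Hence the series converges
almost surely and may be integrated term by term: `E[Z] = ∑ (1 - a) ^ n = 1 / a`.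
-/

open Finset

namespace ProbabilityTheory

variable {Ω ι : Type*} {mΩ : MeasurableSpace Ω} {μ : Measure Ω}

theorem iIndepFun.integral_finset_prod {𝕜 : Type*} [RCLike 𝕜] {X : ι → Ω → 𝕜}
    (hX : iIndepFun X μ) (hXm : ∀ i, AEStronglyMeasurable (X i) μ) (s : Finset ι) :
    ∫ ω, ∏ i ∈ s, X i ω ∂μ = ∏ i ∈ s, ∫ ω, X i ω ∂μ := by
  simp_rw [← Finset.prod_coe_sort s]
  exact (hX.precomp Subtype.val_injective).integral_fun_prod_eq_prod_integral fun i ↦ hXm i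

theorem integral_prod_range_one_sub {Y : ℕ → Ω → ℝ} (hindep : iIndepFun Y μ)
    (hident : ∀ n, IdentDistrib (Y n) (Y 0) μ μ) (hint : ∀ n, Integrable (Y n) μ) (n : ℕ) :
    ∫ ω, ∏ j ∈ range n, (1 - Y j ω) ∂μ = (1 - ∫ ω, Y 0 ω ∂μ) ^ n := by
  have := hindep.isProbabilityMeasure
  have hmean j : ∫ ω, 1 - Y j ω ∂μ = 1 - ∫ ω, Y 0 ω ∂μ := by
    rw [integral_sub (integrable_const 1) (hint j), (hident j).integral_eq, integral_const]
    simp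
  have hindep' : iIndepFun (fun j ω ↦ 1 - Y j ω) μ :=
    hindep.comp (fun _ y ↦ 1 - y) fun _ ↦ by fun_prop
  rw [hindep'.integral_finset_prod fun j ↦ aestronglyMeasurable_const.sub (hint j).1]
  simp [hmean]

end ProbabilityTheory

namespace MeasureTheory

variable {α ι E : Type*} {mα : MeasurableSpace α} {μ : Measure α} [Countable ι]
  [NormedAddCommGroup E] [CompleteSpace E]

theorem ae_summable_of_summable_integral_norm {F : ι → α → E} (hF : ∀ i, Integrable (F i) μ)
    (hsum : Summable fun i ↦ ∫ a, ‖F i a‖ ∂μ) : ∀ᵐ a ∂μ, Summable fun i ↦ F i a := by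
  have hnorm : ∑' i, eLpNorm (F i) 1 μ ≠ ∞ := by
    simp_rw [eLpNorm_one_eq_lintegral_enorm, ← ofReal_integral_norm_eq_lintegral_enorm (hF _)]
    exact hsum.tsum_ofReal_ne_top
  filter_upwards [summable_norm_of_tsum_eLpNorm_ne_top le_rfl (fun i ↦ (hF i).1) hnorm]
    with a ha using ha.of_norm

end MeasureTheory

theorem Finset.prod_one_sub_mem_Icc {ι : Type*} (s : Finset ι) {y : ι → ℝ}
    (hy : ∀ i ∈ s, y i ∈ Set.Icc 0 1) : ∏ i ∈ s, (1 - y i) ∈ Set.Icc 0 1 :=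
  have h i (hi : i ∈ s) : 0 ≤ 1 - y i := sub_nonneg.2 (hy i hi).2
  ⟨prod_nonneg h, prod_le_one h fun i hi ↦ by linarith [(hy i hi).1]⟩

theorem vanilla_holding_time_unbiased_general
    {Ω : Type*} {mΩ : MeasurableSpace Ω} (μ : Measure Ω) [IsProbabilityMeasure μ]
    (Y : ℕ → Ω → ℝ)
    (hindep : iIndepFun Y μ)
    (hident : ∀ n, IdentDistrib (Y n) (Y 0) μ μ)
    (hrange : ∀ n, ∀ᵐ ω ∂μ, Y n ω ∈ Set.Icc (0 : ℝ) 1)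
    (a : ℝ) (ha : a = ∫ ω, Y 0 ω ∂μ) (hapos : 0 < a) :
    (∀ᵐ ω ∂μ, Summable (fun n : ℕ => ∏ j ∈ Finset.range (n + 1), (1 - Y j ω))) ∧
      ∫ ω, (1 + ∑' n : ℕ, ∏ j ∈ Finset.range (n + 1), (1 - Y j ω)) ∂μ = 1 / a := by
  set G : ℕ → Ω → ℝ := fun n ω ↦ ∏ j ∈ range n, (1 - Y j ω)
  have hYint n : Integrable (Y n) μ :=
    .of_bound (hident n).aemeasurable_fst.aestronglyMeasurable 1 <| by
      filter_upwards [hrange n] with ω hω using (Real.norm_of_nonneg hω.1).trans_le hω.2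
  have hGmean n : ∫ ω, G n ω ∂μ = (1 - a) ^ n :=
    ha ▸ integral_prod_range_one_sub hindep hident hYint n
  have hGmem : ∀ᵐ ω ∂μ, ∀ n, G n ω ∈ Set.Icc 0 1 := by
    filter_upwards [ae_all_iff.2 hrange] with ω hω n using prod_one_sub_mem_Icc _ fun j _ ↦ hω j
  have hGint n : Integrable (G n) μ := by
    refine .of_bound (Finset.aestronglyMeasurable_fun_prod _ fun j _ ↦
      aestronglyMeasurable_const.sub (hYint j).1) 1 ?_
    filter_upwards [hGmem] with ω hω using (Real.norm_of_nonneg (hω n).1).trans_le (hω n).2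
  have hGnorm n : ∫ ω, ‖G n ω‖ ∂μ = (1 - a) ^ n :=
    hGmean n ▸ integral_congr_ae (hGmem.mono fun ω hω ↦ Real.norm_of_nonneg (hω n).1)
  have ha1 : a ≤ 1 := by
    simpa [hGmean 1] using integral_nonneg_of_ae (hGmem.mono fun ω hω ↦ (hω 1).1)
  have hsum : Summable fun n ↦ ∫ ω, ‖G n ω‖ ∂μ := by
    simp_rw [hGnorm]; exact summable_geometric_of_lt_one (by linarith) (by linarith)
  have hGsum := ae_summable_of_summable_integral_norm hGint hsum
  refine ⟨hGsum.mono fun ω h ↦ (summable_nat_add_iff (f := (G · ω)) 1).2 h, ?_⟩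
  calc ∫ ω, (1 + ∑' n, G (n + 1) ω) ∂μ = ∫ ω, ∑' n, G n ω ∂μ :=
        integral_congr_ae <| hGsum.mono fun ω h ↦ by simp [h.tsum_eq_zero_add, G]
    _ = ∑' n, (1 - a) ^ n := by
        rw [← integral_tsum_of_summable_integral_norm hGint hsum]; simp_rw [hGmean]
    _ = 1 / a := by rw [tsum_geometric_of_lt_one (by linarith) (by linarith)]; simp

/-- If `(Y n)` are i.i.d. `[0,1]`-valued random variables with mean `a > 0`, then the
random series `Z = 1 + ∑ₙ ∏_{j=1}^n (1 - Y j)` is a.s. finite (summable) and `E[Z] = 1/a`. -/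
theorem vanilla_holding_time_unbiased
    {Ω : Type*} {mΩ : MeasurableSpace Ω} (μ : Measure Ω) [IsProbabilityMeasure μ]
    (Y : ℕ → Ω → ℝ) (hmeas : ∀ n, Measurable (Y n))
    (hindep : iIndepFun Y μ)
    (hident : ∀ n, IdentDistrib (Y n) (Y 0) μ μ)
    (hrange : ∀ n, ∀ᵐ ω ∂μ, Y n ω ∈ Set.Icc (0 : ℝ) 1)
    (a : ℝ) (ha : a = ∫ ω, Y 0 ω ∂μ) (hapos : 0 < a) :
    (∀ᵐ ω ∂μ, Summable (fun n : ℕ => ∏ j ∈ Finset.range (n + 1), (1 - Y j ω))) ∧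
      ∫ ω, (1 + ∑' n : ℕ, ∏ j ∈ Finset.range (n + 1), (1 - Y j ω)) ∂μ = 1 / a :=
  vanilla_holding_time_unbiased_general (mΩ := mΩ) μ Y hindep hident hrange a ha hapos
end

section
/- Let (Y_n)_{n≥1} be i.i.d. random variables with values in [0,1], a := E[Y_1] ∈ (0,1], and r₂ := E[(1-Y_1)²] < 1. Define the first-success time T := inf{n ≥ 1 : U_n ≤ Y_n} where (U_n) are i.i.d. uniform on [0,1) independent of (Y_n) given the Y's, so that conditionally each trial n succeeds with probability Y_n. Then E[Π_{j=1}^{T-1}(1-Y_j)] = a/(1-r₂). -/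
/-!
Decompose according to the first success time `T`: the product `∏_{j<T} w(X_j)` is the sum over
`k` of `∏_{j<k} w(X_j) 1{X_j ∉ A} · 1{X_k ∈ A}`, whose expectation is `r ^ k * p` by independence,
with `r = E[w(X) 1{X ∉ A}]` and `p = P(X ∈ A)`. As `p > 0`, the second Borel–Cantelli lemma makes
`T` finite almost surely, and the geometric series gives `p / (1 - r)`. For the trial
`X = (Y, U)`, `A = {U ≤ Y}`, `w = 1 - Y`, integrating out the uniform `U` gives `p = E[Y] = a` and
`r = E[(1 - Y)(1 - Y)] = r₂`.
-/

open MeasureTheory ProbabilityTheory Finset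
open scoped ENNReal

namespace ProbabilityTheory

variable {Ω β : Type*} {mΩ : MeasurableSpace Ω} {μ : Measure Ω}

section FirstHit

variable (A : Set β) (w : β → ℝ)

/-- `firstHitTerm A w x k = ∏_{j<k} w (x j)` if `k` is the first index with `x k ∈ A`,
and `0` otherwise. -/
noncomputable def firstHitTerm (x : ℕ → β) (k : ℕ) : ℝ :=
  (∏ j ∈ range k, Aᶜ.indicator w (x j)) * A.indicator 1 (x k)

variable {A w}

lemma prod_range_sInf_eq_tsum_firstHitTerm {x : ℕ → β} (hx : ∃ n, x n ∈ A) :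
    ∏ j ∈ range (sInf {n | x n ∈ A}), w (x j) = ∑' k, firstHitTerm A w x k := by
  set N := sInf {n | x n ∈ A}
  have hN : x N ∈ A := Nat.sInf_mem hx
  have hlt : ∀ j < N, x j ∉ A := fun j hj => Nat.notMem_of_lt_sInf hj
  rw [tsum_eq_single N fun k hk => ?_]
  · rw [firstHitTerm, Set.indicator_of_mem hN, Pi.one_apply, mul_one]
    exact prod_congr rfl fun j hj => (Set.indicator_of_mem (hlt j (mem_range.1 hj)) w).symm
  · rcases hk.lt_or_gt with hk | hk
    · rw [firstHitTerm, Set.indicator_of_notMem (hlt k hk), mul_zero]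
    · rw [firstHitTerm, prod_eq_zero (mem_range.2 hk) (Set.indicator_of_notMem (not_not.2 hN) w),
        zero_mul]

lemma firstHitTerm_mem_Icc {x : ℕ → β} (hw : ∀ j, w (x j) ∈ Set.Icc (0 : ℝ) 1) (k : ℕ) :
    firstHitTerm A w x k ∈ Set.Icc (0 : ℝ) 1 := by
  have hc : ∀ j, Aᶜ.indicator w (x j) ∈ Set.Icc (0 : ℝ) 1 := fun j => by
    by_cases h : x j ∈ Aᶜ
    · simpa [Set.indicator_of_mem h] using hw j
    · simp [Set.indicator_of_notMem h]
  have ha : A.indicator (1 : β → ℝ) (x k) ∈ Set.Icc (0 : ℝ) 1 := by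
    by_cases h : x k ∈ A <;> simp [h]
  exact ⟨mul_nonneg (prod_nonneg fun j _ => (hc j).1) ha.1,
    mul_le_one₀ (prod_le_one (fun j _ => (hc j).1) fun j _ => (hc j).2) ha.1 ha.2⟩

end FirstHit

variable [MeasurableSpace β] {X : ℕ → Ω → β} {A : Set β} {w : β → ℝ}

lemma iIndepFun.integral_prod_range_comp (hX : iIndepFun X μ) (mX : ∀ i, Measurable (X i))
    {f : ℕ → β → ℝ} (hf : ∀ i, Measurable (f i)) (n : ℕ) :
    ∫ ω, ∏ j ∈ range n, f j (X j ω) ∂μ = ∏ j ∈ range n, ∫ ω, f j (X j ω) ∂μ := by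
  rw [← Fin.prod_univ_eq_prod_range, ← (hX.precomp Fin.val_injective).integral_fun_prod_comp
    (fun i => (mX i).aemeasurable) (fun i => (hf i).aestronglyMeasurable)]
  congr with ω
  exact (Fin.prod_univ_eq_prod_range (fun j => f j (X j ω)) n).symm

lemma ae_exists_mem_of_iIndepFun (hX : iIndepFun X μ) (mX : ∀ i, Measurable (X i))
    (hident : ∀ n, IdentDistrib (X n) (X 0) μ μ) (hA : MeasurableSet A)
    (hpos : μ (X 0 ⁻¹' A) ≠ 0) :
    ∀ᵐ ω ∂μ, ∃ n, X n ω ∈ A := by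
  have : IsProbabilityMeasure μ := hX.isProbabilityMeasure
  have hmeas : ∀ n, MeasurableSet (X n ⁻¹' A) := fun n => mX n hA
  have hindep : iIndepSet (fun n => X n ⁻¹' A) μ :=
    (iIndepSet_iff_meas_biInter hmeas).2 fun S =>
      hX.measure_inter_preimage_eq_mul S fun _ _ => hA
  have hsum : ∑' n, μ (X n ⁻¹' A) = ∞ := by
    simp_rw [fun n => (hident n).measure_mem_eq hA]
    exact ENNReal.tsum_const_eq_top_of_ne_zero hpos
  have hlimsup : ∀ᵐ ω ∂μ, ω ∈ Filter.limsup (fun n => X n ⁻¹' A) Filter.atTop :=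
    (ae_mem_iff_measure_eq (MeasurableSet.measurableSet_limsup hmeas).nullMeasurableSet).2 <| by
      rw [measure_limsup_eq_one hmeas hindep hsum, measure_univ]
  filter_upwards [hlimsup] with ω hω using (Filter.mem_limsup_iff_frequently_mem.1 hω).exists

lemma integral_indicator_one_comp {Z : Ω → β} (hZ : Measurable Z) (hA : MeasurableSet A) :
    ∫ ω, A.indicator 1 (Z ω) ∂μ = μ.real (Z ⁻¹' A) := by
  rw [← integral_indicator_one (hZ hA)]
  rfl

lemma integral_firstHitTerm (hX : iIndepFun X μ) (mX : ∀ i, Measurable (X i))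
    (hident : ∀ n, IdentDistrib (X n) (X 0) μ μ) (hA : MeasurableSet A) (hw : Measurable w)
    (k : ℕ) :
    ∫ ω, firstHitTerm A w (X · ω) k ∂μ
      = (∫ ω, Aᶜ.indicator w (X 0 ω) ∂μ) ^ k * μ.real (X 0 ⁻¹' A) := by
  set F : ℕ → β → ℝ := fun j => if j < k then Aᶜ.indicator w else A.indicator 1
  have hF : ∀ j, Measurable (F j) := fun j => by
    by_cases hj : j < k
    · simpa [F, hj] using hw.indicator hA.compl
    · simpa [F, hj] using measurable_one.indicator hA
  have hterm : ∀ ω, firstHitTerm A w (X · ω) k = ∏ j ∈ range (k + 1), F j (X j ω) := fun ω => by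
    rw [prod_range_succ, firstHitTerm]
    congr 1
    · exact prod_congr rfl fun j hj => by simp [F, mem_range.1 hj]
    · simp [F]
  have hsame : ∀ j, ∫ ω, F j (X j ω) ∂μ = ∫ ω, F j (X 0 ω) ∂μ := fun j =>
    ((hident j).comp (hF j)).integral_eq
  have hbefore : ∀ j ∈ range k, ∫ ω, F j (X 0 ω) ∂μ = ∫ ω, Aᶜ.indicator w (X 0 ω) ∂μ :=
    fun j hj => by simp [F, mem_range.1 hj]
  simp_rw [hterm]
  rw [hX.integral_prod_range_comp mX hF, prod_congr rfl fun j _ => hsame j, prod_range_succ,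
    prod_congr rfl hbefore, prod_const, card_range, ← integral_indicator_one_comp (mX 0) hA]
  simp [F]

theorem integral_prod_range_sInf_mem (hX : iIndepFun X μ)
    (mX : ∀ i, Measurable (X i)) (hident : ∀ n, IdentDistrib (X n) (X 0) μ μ)
    (hA : MeasurableSet A) (hw : Measurable w)
    (hw01 : ∀ᵐ ω ∂μ, w (X 0 ω) ∈ Set.Icc (0 : ℝ) 1) (hp : 0 < μ.real (X 0 ⁻¹' A))
    (hr : ∫ ω, Aᶜ.indicator w (X 0 ω) ∂μ < 1) :
    ∫ ω, ∏ j ∈ range (sInf {n | X n ω ∈ A}), w (X j ω) ∂μ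
      = μ.real (X 0 ⁻¹' A) / (1 - ∫ ω, Aᶜ.indicator w (X 0 ω) ∂μ) := by
  have : IsProbabilityMeasure μ := hX.isProbabilityMeasure
  set r := ∫ ω, Aᶜ.indicator w (X 0 ω) ∂μ
  have hr0 : 0 ≤ r := integral_nonneg_of_ae <| hw01.mono fun ω hω =>
    Set.indicator_apply_nonneg fun _ => hω.1
  have hw_all : ∀ᵐ ω ∂μ, ∀ j, w (X j ω) ∈ Set.Icc (0 : ℝ) 1 :=
    ae_all_iff.2 fun j => (hident j).symm.ae_mem_snd (hw measurableSet_Icc) hw01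
  have hterm_Icc : ∀ k, ∀ᵐ ω ∂μ, firstHitTerm A w (X · ω) k ∈ Set.Icc (0 : ℝ) 1 := fun k =>
    hw_all.mono fun ω hω => firstHitTerm_mem_Icc hω k
  have hterm_meas : ∀ k, Measurable fun ω => firstHitTerm A w (X · ω) k := fun k =>
    (Finset.measurable_prod _ fun j _ => (hw.indicator hA.compl).comp (mX j)).mul
      ((measurable_one.indicator hA).comp (mX k))
  have hterm_int : ∀ k, Integrable (fun ω => firstHitTerm A w (X · ω) k) μ := fun k =>
    (integrable_const (1 : ℝ)).mono' (hterm_meas k).aestronglyMeasurable <|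
      (hterm_Icc k).mono fun ω hω => by rw [Real.norm_of_nonneg hω.1]; exact hω.2
  have hnorm : ∀ k, ∫ ω, ‖firstHitTerm A w (X · ω) k‖ ∂μ = r ^ k * μ.real (X 0 ⁻¹' A) :=
    fun k => by
      rw [← integral_firstHitTerm hX mX hident hA hw k]
      exact integral_congr_ae <| (hterm_Icc k).mono fun ω hω => Real.norm_of_nonneg hω.1
  -- `sInf ∅ = 0`, so the decomposition needs a success to occur.
  have hsplit : ∀ᵐ ω ∂μ, ∏ j ∈ range (sInf {n | X n ω ∈ A}), w (X j ω)
      = ∑' k, firstHitTerm A w (X · ω) k :=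
    (ae_exists_mem_of_iIndepFun hX mX hident hA ((measureReal_ne_zero_iff).1 hp.ne')).mono
      fun ω hω => prod_range_sInf_eq_tsum_firstHitTerm hω
  calc ∫ ω, ∏ j ∈ range (sInf {n | X n ω ∈ A}), w (X j ω) ∂μ
      = ∫ ω, ∑' k, firstHitTerm A w (X · ω) k ∂μ := integral_congr_ae hsplit
    _ = ∑' k, r ^ k * μ.real (X 0 ⁻¹' A) := by
      rw [← integral_tsum_of_summable_integral_norm hterm_int]
      · exact tsum_congr (integral_firstHitTerm hX mX hident hA hw)
      · simpa only [hnorm] using (summable_geometric_of_lt_one hr0 hr).mul_right _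
    _ = μ.real (X 0 ⁻¹' A) / (1 - r) := by
      rw [tsum_mul_right, tsum_geometric_of_lt_one hr0 hr, inv_mul_eq_div]

lemma IndepFun.integral_indicator_comp_fst [IsProbabilityMeasure μ] {γ : Type*}
    [MeasurableSpace γ] {Y : Ω → β} {U : Ω → γ} (hYU : IndepFun Y U μ) (hY : Measurable Y)
    (hU : Measurable U) {S : Set (β × γ)} (hS : MeasurableSet S) {g : β → ℝ}
    (hg : Measurable g) (hgi : Integrable (fun ω => g (Y ω)) μ) :
    ∫ ω, S.indicator (fun p => g p.1) (Y ω, U ω) ∂μ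
      = ∫ ω, g (Y ω) * (μ.map U).real (Prod.mk (Y ω) ⁻¹' S) ∂μ := by
  have hmap : μ.map (fun ω => (Y ω, U ω)) = (μ.map Y).prod (μ.map U) :=
    (indepFun_iff_map_prod_eq_prod_map_map hY.aemeasurable hU.aemeasurable).1 hYU
  have hint : Integrable (S.indicator fun p => g p.1) ((μ.map Y).prod (μ.map U)) :=
    (((integrable_map_measure hg.aestronglyMeasurable hY.aemeasurable).2 hgi).comp_fst
      (μ.map U)).indicator hS
  have hinner : ∀ y, ∫ u, S.indicator (fun p => g p.1) (y, u) ∂(μ.map U)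
      = g y * (μ.map U).real (Prod.mk y ⁻¹' S) := fun y => by
    rw [mul_comm, ← smul_eq_mul, ← integral_indicator_const _ (measurable_prodMk_left hS)]
    congr with u
  rw [← integral_map (f := S.indicator fun p => g p.1) (hY.prodMk hU).aemeasurable
      ((hg.comp measurable_fst).indicator hS).aestronglyMeasurable, hmap, integral_prod _ hint]
  simp_rw [hinner]
  exact integral_map hY.aemeasurable
    (hg.mul (measurable_measure_prodMk_left hS).ennreal_toReal).aestronglyMeasurable

lemma measureReal_restrict_Ico_Iic {y : ℝ} (hy : y ∈ Set.Icc (0 : ℝ) 1) :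
    (volume.restrict (Set.Ico (0 : ℝ) 1)).real (Set.Iic y) = y := by
  rw [Measure.restrict_congr_set Ico_ae_eq_Icc, measureReal_restrict_apply measurableSet_Iic,
    Set.inter_comm, ← Set.Ici_inter_Iic, Set.inter_assoc, Set.Iic_inter_Iic, min_eq_right hy.2,
    Set.Ici_inter_Iic, Real.volume_real_Icc_of_le hy.1, sub_zero]

section Uniform

variable {Y U : Ω → ℝ} (hYU : IndepFun Y U μ) (hY : Measurable Y) (hU : Measurable U)
  (hUlaw : μ.map U = volume.restrict (Set.Ico (0 : ℝ) 1))
  (hrange : ∀ᵐ ω ∂μ, Y ω ∈ Set.Icc (0 : ℝ) 1) {g : ℝ → ℝ} (hg : Measurable g)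
  (hgi : Integrable (fun ω => g (Y ω)) μ)
include hYU hY hU hUlaw hrange hg hgi

lemma integral_indicator_le_of_uniform [IsProbabilityMeasure μ] :
    ∫ ω, {p : ℝ × ℝ | p.2 ≤ p.1}.indicator (fun p => g p.1) (Y ω, U ω) ∂μ
      = ∫ ω, g (Y ω) * Y ω ∂μ := by
  rw [hYU.integral_indicator_comp_fst hY hU (measurableSet_le measurable_snd measurable_fst) hg hgi,
    hUlaw]
  exact integral_congr_ae <| hrange.mono fun ω hω =>
    congrArg (g (Y ω) * ·) (measureReal_restrict_Ico_Iic hω)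

lemma integral_indicator_compl_le_of_uniform [IsProbabilityMeasure μ] :
    ∫ ω, {p : ℝ × ℝ | p.2 ≤ p.1}ᶜ.indicator (fun p => g p.1) (Y ω, U ω) ∂μ
      = ∫ ω, g (Y ω) * (1 - Y ω) ∂μ := by
  have : IsProbabilityMeasure (μ.map U) := Measure.isProbabilityMeasure_map hU.aemeasurable
  rw [hYU.integral_indicator_comp_fst hY hU (measurableSet_le measurable_snd measurable_fst).compl
    hg hgi]
  refine integral_congr_ae <| hrange.mono fun ω hω => congrArg (g (Y ω) * ·) ?_
  change (μ.map U).real (Set.Iic (Y ω))ᶜ = 1 - Y ω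
  rw [probReal_compl_eq_one_sub measurableSet_Iic, hUlaw, measureReal_restrict_Ico_Iic hω]

end Uniform

end ProbabilityTheory

theorem expected_rejection_product_at_success_general
    {Ω : Type*} {mΩ : MeasurableSpace Ω} (μ : Measure Ω) [IsProbabilityMeasure μ]
    (Y U : ℕ → Ω → ℝ) (hYmeas : ∀ n, Measurable (Y n)) (hUmeas : ∀ n, Measurable (U n))
    (hindep : iIndepFun (fun n ω => (Y n ω, U n ω)) μ)
    (hident : ∀ n, IdentDistrib (fun ω => (Y n ω, U n ω)) (fun ω => (Y 0 ω, U 0 ω)) μ μ)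
    (hYU : ∀ n, IndepFun (Y n) (U n) μ)
    (hU : ∀ n, μ.map (U n) = volume.restrict (Set.Ico (0 : ℝ) 1))
    (hrange : ∀ n, ∀ᵐ ω ∂μ, Y n ω ∈ Set.Icc (0 : ℝ) 1)
    (a : ℝ) (ha : a = ∫ ω, Y 0 ω ∂μ) (ha0 : 0 < a)
    (r₂ : ℝ) (hr₂ : r₂ = ∫ ω, (1 - Y 0 ω) ^ 2 ∂μ) (hr₂1 : r₂ < 1) :
    ∫ ω, ∏ j ∈ Finset.range (sInf {n : ℕ | U n ω ≤ Y n ω}), (1 - Y j ω) ∂μ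
      = a / (1 - r₂) := by
  set A : Set (ℝ × ℝ) := {p | p.2 ≤ p.1}
  have hA : MeasurableSet A := measurableSet_le measurable_snd measurable_fst
  have hX : ∀ n, Measurable fun ω => (Y n ω, U n ω) := fun n => (hYmeas n).prodMk (hUmeas n)
  have hYint : Integrable (Y 0) μ := Integrable.of_bound (hYmeas 0).aestronglyMeasurable 1 <|
    (hrange 0).mono fun ω hω => by rw [Real.norm_of_nonneg hω.1]; exact hω.2
  have hp : μ.real ((fun ω => (Y 0 ω, U 0 ω)) ⁻¹' A) = a := by
    rw [← integral_indicator_one_comp (hX 0) hA, ha]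
    exact (integral_indicator_le_of_uniform (hYU 0) (hYmeas 0) (hUmeas 0) (hU 0) (hrange 0)
      (g := fun _ => 1) measurable_const (integrable_const 1)).trans (by simp)
  have hr : ∫ ω, Aᶜ.indicator (fun p => 1 - p.1) (Y 0 ω, U 0 ω) ∂μ = r₂ := by
    refine (integral_indicator_compl_le_of_uniform (hYU 0) (hYmeas 0) (hUmeas 0) (hU 0) (hrange 0)
      (g := fun y => 1 - y) (measurable_const.sub measurable_id)
      ((integrable_const 1).sub hYint)).trans ?_
    simp_rw [hr₂, sq]
  have hw : Measurable fun p : ℝ × ℝ => 1 - p.1 := by fun_prop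
  have key := integral_prod_range_sInf_mem hindep hX hident hA hw
    ((hrange 0).mono fun ω hω => ⟨sub_nonneg.2 hω.2, sub_le_self _ hω.1⟩) (hp ▸ ha0) (hr ▸ hr₂1)
  rw [hp, hr] at key
  exact key

/-- Accept/reject model: i.i.d. acceptance probabilities `Y n ∈ [0,1]` with mean
`a ∈ (0,1]` and `r₂ = E[(1-Y₁)²] < 1`, i.i.d. uniforms `U n` on `[0,1)` independent of the
`Y`'s, and `T` the first success time (trial `n` succeeds iff `U n ≤ Y n`). Then the expected
product of rejection probabilities before the success satisfies
`E[∏_{j=1}^{T-1} (1 - Y j)] = a / (1 - r₂)`. Here trials are indexed from `0`, so that the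
product runs over `j < N` where `N` is the (0-based) index of the first success. -/
theorem expected_rejection_product_at_success
    {Ω : Type*} {mΩ : MeasurableSpace Ω} (μ : Measure Ω) [IsProbabilityMeasure μ]
    (Y U : ℕ → Ω → ℝ) (hYmeas : ∀ n, Measurable (Y n)) (hUmeas : ∀ n, Measurable (U n))
    (hindep : iIndepFun (fun n ω => (Y n ω, U n ω)) μ)
    (hident : ∀ n, IdentDistrib (fun ω => (Y n ω, U n ω)) (fun ω => (Y 0 ω, U 0 ω)) μ μ)
    (hYU : ∀ n, IndepFun (Y n) (U n) μ)
    (hU : ∀ n, μ.map (U n) = volume.restrict (Set.Ico (0 : ℝ) 1))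
    (hrange : ∀ n, ∀ᵐ ω ∂μ, Y n ω ∈ Set.Icc (0 : ℝ) 1)
    (a : ℝ) (ha : a = ∫ ω, Y 0 ω ∂μ) (ha0 : 0 < a) (ha1 : a ≤ 1)
    (r₂ : ℝ) (hr₂ : r₂ = ∫ ω, (1 - Y 0 ω) ^ 2 ∂μ) (hr₂1 : r₂ < 1) :
    ∫ ω, ∏ j ∈ Finset.range (sInf {n : ℕ | U n ω ≤ Y n ω}), (1 - Y j ω) ∂μ
      = a / (1 - r₂) :=
  expected_rejection_product_at_success_general (mΩ := mΩ) μ Y U hYmeas hUmeas hindep hident hYU hU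
    hrange a ha ha0 r₂ hr₂ hr₂1
end

section
/- In the setting of the previous statement (i.i.d. acceptance probabilities Y_n ∈ [0,1] with mean a ∈ (0,1] and r₂ = E[(1-Y_1)²] < 1, first-success time T), the expected bias of the truncated vanilla holding-time estimator equals (1-a)/(1-r₂); precisely, E[Π_{j=1}^{T-1}(1-Y_j)] · E[Σ_{n≥1} Π_{j=1}^n (1 - Ỹ_j)] = (1-a)/(1-r₂), where (Ỹ_n) is an independent i.i.d. copy of (Y_n). -/
open MeasureTheory ProbabilityTheory Finset
open scoped ENNReal

/-!
Let `T` be the first `n` with `U n ≤ Y n`. Since `n` initial rejections have probability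
`(1 - a) ^ n`, `T` is a.s. finite, and then `∏_{j<T} (1 - Y j)` is the sum over `n` of
`∏_{j<n} 1{U j > Y j} (1 - Y j) · 1{U n ≤ Y n}`. Integrating out the uniform `U j` turns the
factors into `(1 - Y j)²` and `Y n`, so by independence the `n`-th term has mean `r₂ ^ n * a` and
the first expectation is `a / (1 - r₂)`. Likewise the `n`-th term of the tail series has
mean `(1 - a) ^ (n + 1)`, so the second expectation is `(1 - a) / a`.
-/

theorem prod_range_sInf_eq_tsum {R : Type*} [CommSemiring R] [TopologicalSpace R]
    (P : ℕ → Prop) [DecidablePred P] (c : ℕ → R) (h : ∃ n, P n) :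
    ∏ j ∈ range (sInf {n | P n}), c j
      = ∑' n, (∏ j ∈ range n, if P j then 0 else c j) * if P n then 1 else 0 := by
  have hT : P (sInf {n | P n}) := Nat.sInf_mem h
  rw [tsum_eq_single (sInf {n | P n})]
  · rw [if_pos hT, mul_one]
    exact prod_congr rfl fun j hj => (if_neg (Nat.notMem_of_lt_sInf (mem_range.1 hj))).symm
  · intro n hn
    rcases hn.lt_or_gt with hlt | hgt
    · rw [if_neg (show ¬ P n from Nat.notMem_of_lt_sInf hlt), mul_zero]
    · rw [prod_eq_zero (mem_range.2 hgt) (by rw [if_pos hT]), zero_mul]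

theorem setIntegral_Ico_ite_le {y : ℝ} (hy : y ∈ Set.Icc (0 : ℝ) 1) (c d : ℝ) :
    ∫ u in Set.Ico (0 : ℝ) 1, (if u ≤ y then c else d) = c * y + d * (1 - y) := by
  have hIoi : Set.Ioi y ∩ Set.Ico (0 : ℝ) 1 = Set.Ioo y 1 := by
    ext u
    simp only [Set.mem_inter_iff, Set.mem_Ioi, Set.mem_Ico, Set.mem_Ioo]
    constructor
    · exact fun h => ⟨h.1, h.2.2⟩
    · exact fun h => ⟨h.1, hy.1.trans h.1.le, h.2⟩
  have hite : (fun u => if u ≤ y then c else d)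
      = fun u => c - (Set.Ioi y).indicator (fun _ => c - d) u := by
    ext u
    by_cases hu : u ≤ y <;> simp [hu, not_lt.2, lt_of_not_ge]
  rw [hite, integral_sub (integrable_const c) ((integrable_const _).indicator measurableSet_Ioi),
    integral_indicator_const _ measurableSet_Ioi, measureReal_restrict_apply measurableSet_Ioi,
    hIoi, Real.volume_real_Ioo_of_le hy.2]
  simp only [integral_const, measureReal_restrict_apply MeasurableSet.univ, Set.univ_inter,
    Real.volume_real_Ico_of_le zero_le_one, sub_zero, smul_eq_mul, one_mul]
  ring

section

variable {Ω β : Type*} {mΩ : MeasurableSpace Ω} {mβ : MeasurableSpace β} {μ : Measure Ω}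

theorem MeasureTheory.integral_tsum_of_nonneg {F : ℕ → Ω → ℝ} (hF : ∀ n, Integrable (F n) μ)
    (hF0 : ∀ n, 0 ≤ᵐ[μ] F n) (hsum : Summable fun n => ∫ ω, F n ω ∂μ) :
    ∫ ω, ∑' n, F n ω ∂μ = ∑' n, ∫ ω, F n ω ∂μ := by
  refine (integral_tsum_of_summable_integral_norm hF (hsum.congr fun n => ?_)).symm
  exact integral_congr_ae
    (by filter_upwards [hF0 n] with ω hω using (Real.norm_of_nonneg hω).symm)

theorem ProbabilityTheory.iIndepFun.integral_prod_range_comp_s6 {𝕜 : Type*} [RCLike 𝕜]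
    {X : ℕ → Ω → β} (hX : iIndepFun X μ) (mX : ∀ i, Measurable (X i)) {f : ℕ → β → 𝕜}
    (hf : ∀ i, Measurable (f i)) (m : ℕ) :
    ∫ ω, ∏ i ∈ range m, f i (X i ω) ∂μ = ∏ i ∈ range m, ∫ ω, f i (X i ω) ∂μ := by
  have h := (hX.precomp (Fin.val_injective (n := m))).integral_fun_prod_comp
    (X := fun i : Fin m => X i) (f := fun i => f i)
    (fun i => (mX i).aemeasurable) (fun i => (hf i).aestronglyMeasurable)
  simpa only [prod_range] using h

theorem ProbabilityTheory.iIndepFun.integral_prod_range_mul_comp {𝕜 : Type*} [RCLike 𝕜]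
    {X : ℕ → Ω → β} (hX : iIndepFun X μ) (mX : ∀ i, Measurable (X i))
    (hident : ∀ i, IdentDistrib (X i) (X 0) μ μ) {f g : β → 𝕜} (hf : Measurable f)
    (hg : Measurable g) (n : ℕ) :
    ∫ ω, (∏ j ∈ range n, f (X j ω)) * g (X n ω) ∂μ
      = (∫ ω, f (X 0 ω) ∂μ) ^ n * ∫ ω, g (X 0 ω) ∂μ := by
  have hmean {φ : β → 𝕜} (hφ : Measurable φ) (j : ℕ) :
      ∫ ω, φ (X j ω) ∂μ = ∫ ω, φ (X 0 ω) ∂μ :=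
    ((hident j).comp hφ).integral_eq
  have hsplit (x : ℕ → (β → 𝕜) → 𝕜) :
      ∏ j ∈ range (n + 1), x j (if j = n then g else f)
        = (∏ j ∈ range n, x j f) * x n g := by
    rw [prod_range_succ, if_pos rfl]
    exact congrArg (· * _) (prod_congr rfl fun j hj => by rw [if_neg (mem_range.1 hj).ne])
  -- the product formula for the family `f, …, f, g` of length `n + 1`
  have h := hX.integral_prod_range_comp_s6 mX (f := fun i => if i = n then g else f)
    (fun i => by split_ifs <;> assumption) (n + 1)
  rw [integral_congr_ae (ae_of_all _ fun ω => (hsplit fun j φ => φ (X j ω)).symm), h,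
    hsplit fun j φ => ∫ ω, φ (X j ω) ∂μ, prod_congr rfl fun j _ => hmean hf j, prod_const,
    card_range, hmean hg]

theorem ProbabilityTheory.iIndepFun.integral_tsum_prod_range_succ [IsFiniteMeasure μ]
    {W : ℕ → Ω → ℝ} (hindep : iIndepFun W μ) (hW : ∀ n, Measurable (W n))
    (hident : ∀ n, IdentDistrib (W n) (W 0) μ μ)
    (hrange : ∀ n, ∀ᵐ ω ∂μ, W n ω ∈ unitInterval) (hlt : ∫ ω, W 0 ω ∂μ < 1) :
    ∫ ω, ∑' n, ∏ j ∈ range (n + 1), W j ω ∂μ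
      = (∫ ω, W 0 ω ∂μ) / (1 - ∫ ω, W 0 ω ∂μ) := by
  set b := ∫ ω, W 0 ω ∂μ
  have hb0 : 0 ≤ b := integral_nonneg_of_ae ((hrange 0).mono fun _ h => h.1)
  have hterm n : ∫ ω, ∏ j ∈ range (n + 1), W j ω ∂μ = b ^ n * b := by
    simp_rw [prod_range_succ]
    exact hindep.integral_prod_range_mul_comp hW hident measurable_id measurable_id n
  have hunit n : ∀ᵐ ω ∂μ, ∏ j ∈ range (n + 1), W j ω ∈ unitInterval := by
    filter_upwards [ae_all_iff.2 hrange] with ω hω using unitInterval.prod_mem fun j _ => hω j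
  rw [integral_tsum_of_nonneg (fun n => Integrable.of_mem_Icc 0 1
      (Finset.measurable_prod _ fun j _ => hW j).aemeasurable (hunit n))
    (fun n => (hunit n).mono fun _ h => h.1)
    (by simpa only [hterm] using (summable_geometric_of_lt_one hb0 hlt).mul_right b),
    tsum_congr hterm, tsum_mul_right, tsum_geometric_of_lt_one hb0 hlt, div_eq_inv_mul]

theorem ProbabilityTheory.iIndepFun.measure_iInter_preimage_eq_zero {X : ℕ → Ω → β}
    (hX : iIndepFun X μ) {S : Set β} (hS : MeasurableSet S) {q : ℝ≥0∞} (hq : q < 1)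
    (hle : ∀ n, μ (X n ⁻¹' S) ≤ q) : μ (⋂ n, X n ⁻¹' S) = 0 := by
  refine le_antisymm (ge_of_tendsto' (ENNReal.tendsto_pow_atTop_nhds_zero_of_lt_one hq)
    fun m => ?_) zero_le
  calc μ (⋂ n, X n ⁻¹' S) ≤ μ (⋂ n ∈ range m, X n ⁻¹' S) :=
        measure_mono fun ω hω => Set.mem_iInter₂.2 fun n _ => Set.mem_iInter.1 hω n
    _ = ∏ n ∈ range m, μ (X n ⁻¹' S) := hX.meas_biInter fun n _ => ⟨S, hS, rfl⟩
    _ ≤ q ^ m := (prod_le_pow_card _ _ _ fun n _ => hle n).trans_eq (by rw [card_range])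

theorem ProbabilityTheory.IndepFun.integral_comp_prodMk {α : Type*} {mα : MeasurableSpace α}
    [IsFiniteMeasure μ] {Y : Ω → α} {U : Ω → β}
    (hY : Measurable Y) (hU : Measurable U) (hYU : IndepFun Y U μ) {φ : α × β → ℝ}
    (hφ : Measurable φ) (hint : Integrable (fun ω => φ (Y ω, U ω)) μ) :
    ∫ ω, φ (Y ω, U ω) ∂μ = ∫ ω, ∫ u, φ (Y ω, u) ∂(μ.map U) ∂μ := by
  have hmap : μ.map (fun ω => (Y ω, U ω)) = (μ.map Y).prod (μ.map U) :=
    (indepFun_iff_map_prod_eq_prod_map_map hY.aemeasurable hU.aemeasurable).mp hYU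
  have hφint : Integrable φ ((μ.map Y).prod (μ.map U)) := by
    rw [← hmap]
    exact (integrable_map_measure hφ.aestronglyMeasurable (hY.prodMk hU).aemeasurable).2 hint
  calc ∫ ω, φ (Y ω, U ω) ∂μ = ∫ p, φ p ∂((μ.map Y).prod (μ.map U)) := by
        rw [← hmap, integral_map (hY.prodMk hU).aemeasurable hφ.aestronglyMeasurable]
    _ = ∫ y, ∫ u, φ (y, u) ∂(μ.map U) ∂(μ.map Y) := integral_prod φ hφint
    _ = ∫ ω, ∫ u, φ (Y ω, u) ∂(μ.map U) ∂μ :=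
        integral_map hY.aemeasurable
          hφ.stronglyMeasurable.integral_prod_right'.aestronglyMeasurable

theorem ProbabilityTheory.IndepFun.integral_ite_le_of_uniform [IsFiniteMeasure μ]
    {Y U : Ω → ℝ} (hY : Measurable Y) (hU : Measurable U) (hYU : IndepFun Y U μ)
    (hUnif : μ.map U = volume.restrict (Set.Ico (0 : ℝ) 1))
    (hrange : ∀ᵐ ω ∂μ, Y ω ∈ Set.Icc (0 : ℝ) 1) {c d : ℝ → ℝ} (hc : Measurable c)
    (hd : Measurable d) (hci : Integrable (fun ω => c (Y ω)) μ)
    (hdi : Integrable (fun ω => d (Y ω)) μ) :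
    ∫ ω, (if U ω ≤ Y ω then c (Y ω) else d (Y ω)) ∂μ
      = ∫ ω, c (Y ω) * Y ω + d (Y ω) * (1 - Y ω) ∂μ := by
  have hφ : Measurable fun p : ℝ × ℝ => if p.2 ≤ p.1 then c p.1 else d p.1 :=
    Measurable.ite (measurableSet_le measurable_snd measurable_fst) (hc.comp measurable_fst)
      (hd.comp measurable_fst)
  have hint : Integrable (fun ω => if U ω ≤ Y ω then c (Y ω) else d (Y ω)) μ :=
    (hci.norm.add hdi.norm).mono' (hφ.comp (hY.prodMk hU)).aestronglyMeasurable
      (ae_of_all _ fun ω => by split_ifs <;> simp)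
  rw [hYU.integral_comp_prodMk hY hU hφ hint, hUnif]
  exact integral_congr_ae
    (by filter_upwards [hrange] with ω hω using setIntegral_Ico_ite_le hω _ _)

variable [IsProbabilityMeasure μ] {Y U : ℕ → Ω → ℝ}

theorem ae_exists_uniform_le (hY : ∀ n, Measurable (Y n)) (hU : ∀ n, Measurable (U n))
    (hindep : iIndepFun (fun n ω => (Y n ω, U n ω)) μ)
    (hident : ∀ n, IdentDistrib (fun ω => (Y n ω, U n ω)) (fun ω => (Y 0 ω, U 0 ω)) μ μ)
    (hYU : IndepFun (Y 0) (U 0) μ) (hUnif : μ.map (U 0) = volume.restrict (Set.Ico (0 : ℝ) 1))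
    (hrange : ∀ᵐ ω ∂μ, Y 0 ω ∈ Set.Icc (0 : ℝ) 1) (hpos : 0 < ∫ ω, Y 0 ω ∂μ) :
    ∀ᵐ ω ∂μ, ∃ n, U n ω ≤ Y n ω := by
  set S : Set (ℝ × ℝ) := {p | ¬ p.2 ≤ p.1}
  have hS : MeasurableSet S := (measurableSet_le measurable_snd measurable_fst).compl
  have hYint : Integrable (Y 0) μ := Integrable.of_mem_Icc 0 1 (hY 0).aemeasurable hrange
  have hreject :
      μ ((fun ω => (Y 0 ω, U 0 ω)) ⁻¹' S) = ENNReal.ofReal (1 - ∫ ω, Y 0 ω ∂μ) := by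
    rw [← ofReal_measureReal, ← integral_indicator_one (hS.preimage ((hY 0).prodMk (hU 0)))]
    congr 1
    calc ∫ ω, ((fun ω => (Y 0 ω, U 0 ω)) ⁻¹' S).indicator 1 ω ∂μ
        = ∫ ω, (if U 0 ω ≤ Y 0 ω then 0 else 1) ∂μ := by
          congr with ω
          by_cases h : U 0 ω ≤ Y 0 ω <;> simp [S, Set.indicator, h]
      _ = ∫ ω, 0 * Y 0 ω + 1 * (1 - Y 0 ω) ∂μ :=
          hYU.integral_ite_le_of_uniform (hY 0) (hU 0) hUnif hrange measurable_const
            measurable_const (integrable_const _) (integrable_const _)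
      _ = 1 - ∫ ω, Y 0 ω ∂μ := by simp [integral_sub (integrable_const 1) hYint]
  have hnull := hindep.measure_iInter_preimage_eq_zero hS
    (ENNReal.ofReal_lt_one.2 (by linarith))
    fun n => (((hident n).measure_mem_eq hS).trans hreject).le
  rw [ae_iff]
  convert hnull using 2
  ext ω
  simp [S]

theorem integral_prod_rejection_mul_acceptance (hY : ∀ n, Measurable (Y n))
    (hU : ∀ n, Measurable (U n)) (hindep : iIndepFun (fun n ω => (Y n ω, U n ω)) μ)
    (hident : ∀ n, IdentDistrib (fun ω => (Y n ω, U n ω)) (fun ω => (Y 0 ω, U 0 ω)) μ μ)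
    (hYU : IndepFun (Y 0) (U 0) μ) (hUnif : μ.map (U 0) = volume.restrict (Set.Ico (0 : ℝ) 1))
    (hrange : ∀ᵐ ω ∂μ, Y 0 ω ∈ Set.Icc (0 : ℝ) 1) (n : ℕ) :
    ∫ ω, (∏ j ∈ range n, if U j ω ≤ Y j ω then 0 else 1 - Y j ω)
        * (if U n ω ≤ Y n ω then 1 else 0) ∂μ
      = (∫ ω, (1 - Y 0 ω) ^ 2 ∂μ) ^ n * ∫ ω, Y 0 ω ∂μ := by
  have hYint : Integrable (Y 0) μ := Integrable.of_mem_Icc 0 1 (hY 0).aemeasurable hrange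
  have hle : MeasurableSet {p : ℝ × ℝ | p.2 ≤ p.1} :=
    measurableSet_le measurable_snd measurable_fst
  have hrej :
      ∫ ω, (if U 0 ω ≤ Y 0 ω then 0 else 1 - Y 0 ω) ∂μ = ∫ ω, (1 - Y 0 ω) ^ 2 ∂μ := by
    refine (hYU.integral_ite_le_of_uniform (c := fun _ => 0) (d := fun y => 1 - y) (hY 0) (hU 0)
      hUnif hrange measurable_const (by fun_prop) (integrable_const _)
      ((integrable_const _).sub hYint)).trans (integral_congr_ae (ae_of_all _ fun ω => ?_))
    ring
  have hacc : ∫ ω, (if U 0 ω ≤ Y 0 ω then 1 else 0) ∂μ = ∫ ω, Y 0 ω ∂μ := by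
    refine (hYU.integral_ite_le_of_uniform (c := fun _ => 1) (d := fun _ => 0) (hY 0) (hU 0)
      hUnif hrange measurable_const measurable_const (integrable_const _)
      (integrable_const _)).trans (integral_congr_ae (ae_of_all _ fun ω => ?_))
    simp
  rw [← hrej, ← hacc]
  exact hindep.integral_prod_range_mul_comp (fun n => (hY n).prodMk (hU n)) hident
    (f := fun p => if p.2 ≤ p.1 then 0 else 1 - p.1) (g := fun p => if p.2 ≤ p.1 then 1 else 0)
    (Measurable.ite hle measurable_const (by fun_prop))
    (Measurable.ite hle measurable_const measurable_const) n

theorem integral_prod_one_sub_until_uniform_le (hY : ∀ n, Measurable (Y n))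
    (hU : ∀ n, Measurable (U n)) (hindep : iIndepFun (fun n ω => (Y n ω, U n ω)) μ)
    (hident : ∀ n, IdentDistrib (fun ω => (Y n ω, U n ω)) (fun ω => (Y 0 ω, U 0 ω)) μ μ)
    (hYU : IndepFun (Y 0) (U 0) μ) (hUnif : μ.map (U 0) = volume.restrict (Set.Ico (0 : ℝ) 1))
    (hrange : ∀ n, ∀ᵐ ω ∂μ, Y n ω ∈ Set.Icc (0 : ℝ) 1) (hpos : 0 < ∫ ω, Y 0 ω ∂μ)
    (hr₂ : ∫ ω, (1 - Y 0 ω) ^ 2 ∂μ < 1) :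
    ∫ ω, ∏ j ∈ range (sInf {n | U n ω ≤ Y n ω}), (1 - Y j ω) ∂μ
      = (∫ ω, Y 0 ω ∂μ) / (1 - ∫ ω, (1 - Y 0 ω) ^ 2 ∂μ) := by
  set G : ℕ → Ω → ℝ := fun n ω => (∏ j ∈ range n, if U j ω ≤ Y j ω then 0 else 1 - Y j ω)
    * (if U n ω ≤ Y n ω then 1 else 0)
  have hterm := integral_prod_rejection_mul_acceptance hY hU hindep hident hYU hUnif (hrange 0)
  have hGmeas n : Measurable (G n) :=
    (Finset.measurable_prod _ fun j _ => Measurable.ite (measurableSet_le (hU j) (hY j))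
      measurable_const (measurable_const.sub (hY j))).mul
      (Measurable.ite (measurableSet_le (hU n) (hY n)) measurable_const measurable_const)
  have hGunit n : ∀ᵐ ω ∂μ, G n ω ∈ unitInterval := by
    filter_upwards [ae_all_iff.2 hrange] with ω hω
    refine unitInterval.mul_mem (unitInterval.prod_mem fun j _ => ?_) ?_ <;> split_ifs
    exacts [unitInterval.zero_mem, Set.Icc.mem_iff_one_sub_mem.1 (hω j), unitInterval.one_mem,
      unitInterval.zero_mem]
  have hr₂0 : 0 ≤ ∫ ω, (1 - Y 0 ω) ^ 2 ∂μ := integral_nonneg fun ω => sq_nonneg _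
  calc ∫ ω, ∏ j ∈ range (sInf {n | U n ω ≤ Y n ω}), (1 - Y j ω) ∂μ
      = ∫ ω, ∑' n, G n ω ∂μ := by
        refine integral_congr_ae ?_
        filter_upwards [ae_exists_uniform_le hY hU hindep hident hYU hUnif (hrange 0) hpos]
          with ω hω using prod_range_sInf_eq_tsum _ _ hω
    _ = ∑' n, ∫ ω, G n ω ∂μ :=
        integral_tsum_of_nonneg
          (fun n => Integrable.of_mem_Icc 0 1 (hGmeas n).aemeasurable (hGunit n))
          (fun n => (hGunit n).mono fun _ h => h.1)
          (by simpa only [G, hterm] using (summable_geometric_of_lt_one hr₂0 hr₂).mul_right _)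
    _ = (∫ ω, Y 0 ω ∂μ) / (1 - ∫ ω, (1 - Y 0 ω) ^ 2 ∂μ) := by
        rw [tsum_congr hterm, tsum_mul_right, tsum_geometric_of_lt_one hr₂0 hr₂, div_eq_inv_mul]

end

theorem truncated_vanilla_bias_general
    {Ω : Type*} {mΩ : MeasurableSpace Ω} (μ : Measure Ω) [IsProbabilityMeasure μ]
    (Y U Ytil : ℕ → Ω → ℝ)
    (hYmeas : ∀ n, Measurable (Y n)) (hUmeas : ∀ n, Measurable (U n))
    (hYtilmeas : ∀ n, Measurable (Ytil n))
    (hindep : iIndepFun (fun n ω => (Y n ω, U n ω)) μ)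
    (hident : ∀ n, IdentDistrib (fun ω => (Y n ω, U n ω)) (fun ω => (Y 0 ω, U 0 ω)) μ μ)
    (hYU : ∀ n, IndepFun (Y n) (U n) μ)
    (hU : ∀ n, μ.map (U n) = volume.restrict (Set.Ico (0 : ℝ) 1))
    (hindep' : iIndepFun Ytil μ)
    (hident' : ∀ n, IdentDistrib (Ytil n) (Y 0) μ μ)
    (hrange : ∀ n, ∀ᵐ ω ∂μ, Y n ω ∈ Set.Icc (0 : ℝ) 1)
    (hrange' : ∀ n, ∀ᵐ ω ∂μ, Ytil n ω ∈ Set.Icc (0 : ℝ) 1)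
    (a : ℝ) (ha : a = ∫ ω, Y 0 ω ∂μ) (ha0 : 0 < a)
    (r₂ : ℝ) (hr₂ : r₂ = ∫ ω, (1 - Y 0 ω) ^ 2 ∂μ) (hr₂1 : r₂ < 1) :
    (∫ ω, ∏ j ∈ Finset.range (sInf {n : ℕ | U n ω ≤ Y n ω}), (1 - Y j ω) ∂μ)
      * (∫ ω, ∑' n : ℕ, ∏ j ∈ Finset.range (n + 1), (1 - Ytil j ω) ∂μ)
      = (1 - a) / (1 - r₂) := by
  subst ha hr₂
  have hsub : Measurable fun y : ℝ => 1 - y := by fun_prop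
  have hmean : ∫ ω, 1 - Ytil 0 ω ∂μ = 1 - ∫ ω, Y 0 ω ∂μ := by
    rw [show ∫ ω, 1 - Ytil 0 ω ∂μ = ∫ ω, 1 - Y 0 ω ∂μ from ((hident' 0).comp hsub).integral_eq,
      integral_sub (integrable_const 1)
        (Integrable.of_mem_Icc 0 1 (hYmeas 0).aemeasurable (hrange 0)),
      integral_const]
    simp
  have htail : ∫ ω, ∑' n, ∏ j ∈ range (n + 1), (1 - Ytil j ω) ∂μ
      = (1 - ∫ ω, Y 0 ω ∂μ) / (1 - (1 - ∫ ω, Y 0 ω ∂μ)) := by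
    rw [← hmean]
    exact (hindep'.comp (fun _ y => 1 - y) fun _ => hsub).integral_tsum_prod_range_succ
      (W := fun n ω => 1 - Ytil n ω) (fun n => hsub.comp (hYtilmeas n))
      (fun n => ((hident' n).trans (hident' 0).symm).comp hsub)
      (fun n => (hrange' n).mono fun _ h => Set.Icc.mem_iff_one_sub_mem.1 h) (by linarith)
  rw [integral_prod_one_sub_until_uniform_le hYmeas hUmeas hindep hident (hYU 0) (hU 0) hrange
    ha0 hr₂1, htail, sub_sub_cancel]
  field_simp

/-- Bias of the truncated vanilla holding-time estimator: in the accept/reject model with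
i.i.d. acceptance probabilities `Y n ∈ [0,1]`, mean `a ∈ (0,1]`, `r₂ = E[(1-Y₁)²] < 1`,
first-success time `T`, and an independent i.i.d. copy `(Ỹ n)`,
`E[∏_{j=1}^{T-1} (1-Y j)] · E[∑ₙ ∏_{j=1}^n (1-Ỹ j)] = (1-a)/(1-r₂)`. -/
theorem truncated_vanilla_bias
    {Ω : Type*} {mΩ : MeasurableSpace Ω} (μ : Measure Ω) [IsProbabilityMeasure μ]
    (Y U Ytil : ℕ → Ω → ℝ)
    (hYmeas : ∀ n, Measurable (Y n)) (hUmeas : ∀ n, Measurable (U n))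
    (hYtilmeas : ∀ n, Measurable (Ytil n))
    (hindep : iIndepFun (fun n ω => (Y n ω, U n ω)) μ)
    (hident : ∀ n, IdentDistrib (fun ω => (Y n ω, U n ω)) (fun ω => (Y 0 ω, U 0 ω)) μ μ)
    (hYU : ∀ n, IndepFun (Y n) (U n) μ)
    (hU : ∀ n, μ.map (U n) = volume.restrict (Set.Ico (0 : ℝ) 1))
    (hindep' : iIndepFun Ytil μ)
    (hident' : ∀ n, IdentDistrib (Ytil n) (Y 0) μ μ)
    (hindepYYtil : IndepFun (fun ω => fun n : ℕ => (Y n ω, U n ω))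
      (fun ω => fun n : ℕ => Ytil n ω) μ)
    (hrange : ∀ n, ∀ᵐ ω ∂μ, Y n ω ∈ Set.Icc (0 : ℝ) 1)
    (hrange' : ∀ n, ∀ᵐ ω ∂μ, Ytil n ω ∈ Set.Icc (0 : ℝ) 1)
    (a : ℝ) (ha : a = ∫ ω, Y 0 ω ∂μ) (ha0 : 0 < a) (ha1 : a ≤ 1)
    (r₂ : ℝ) (hr₂ : r₂ = ∫ ω, (1 - Y 0 ω) ^ 2 ∂μ) (hr₂1 : r₂ < 1) :
    (∫ ω, ∏ j ∈ Finset.range (sInf {n : ℕ | U n ω ≤ Y n ω}), (1 - Y j ω) ∂μ)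
      * (∫ ω, ∑' n : ℕ, ∏ j ∈ Finset.range (n + 1), (1 - Ytil j ω) ∂μ)
      = (1 - a) / (1 - r₂) :=
  truncated_vanilla_bias_general (mΩ := mΩ) μ Y U Ytil hYmeas hUmeas hYtilmeas hindep hident hYU hU
    hindep' hident' hrange hrange' a ha ha0 r₂ hr₂ hr₂1
end

section
/- Let P be a Markov kernel on a measurable space E and μ a probability measure on E. Define the measure μ_aug on E × E by μ_aug(A₁ × A₂) := ∫_{A₁} μ(dx) P(x, A₂). If μ is invariant for the Markov kernel K_aug given by K_aug((x,y), ·) := (1-α(x,y)) δ_x ⊗ P + α(x,y) δ_y ⊗ P, where α is a measurable function E × E → [0,1] such that the Metropolis–Hastings kernel K_MH with proposal P and acceptance α has invariant measure μ, then μ_aug is invariant for K_aug. -/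
/-!
Write the augmented kernel at `z = (x, y)` as `A z ⊗ₘ P`, where
`A z = (1 - α z) δ_x + α z δ_y` is the accept/reject step. Since composition with `· ⊗ₘ P`
commutes with mixing, the augmented chain started from `μ ⊗ₘ P` is `(A ∘ₘ (μ ⊗ₘ P)) ⊗ₘ P`.
Integrating the accept/reject step against a proposal drawn from `P x` is exactly one
Metropolis–Hastings step from `x`, so `A ∘ₘ (μ ⊗ₘ P)` is the Metropolis–Hastings kernel
applied to `μ`, which is `μ` by invariance.
-/

open MeasureTheory ProbabilityTheory
open scoped ENNReal

namespace MeasureTheory.Measure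

variable {α β γ : Type*} {mα : MeasurableSpace α} {mβ : MeasurableSpace β}
  {mγ : MeasurableSpace γ}

lemma comp_compProd_eq_snd_comp (μ : Measure α) [SFinite μ] (κ : Kernel α β) [IsSFiniteKernel κ]
    (η : Kernel (α × β) γ) [IsSFiniteKernel η] :
    η ∘ₘ (μ ⊗ₘ κ) = (κ ⊗ₖ η).snd ∘ₘ μ := by
  rw [comp_compProd_comm, Measure.snd, Measure.map_comp _ _ measurable_snd, Kernel.snd_eq]

lemma compProd_comp_eq_bind (μ : Measure α) [SFinite μ] (κ : Kernel α β) [IsSFiniteKernel κ]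
    (η : Kernel β γ) [IsSFiniteKernel η] :
    (κ ∘ₘ μ) ⊗ₘ η = μ.bind (fun a => κ a ⊗ₘ η) := by
  rw [compProd_eq_comp_prod, comp_assoc]
  congr 1
  ext a : 1
  rw [Kernel.comp_apply, compProd_eq_comp_prod]

lemma measurable_smul_dirac {f : α → ℝ≥0∞} {g : α → β} (hf : Measurable f) (hg : Measurable g) :
    Measurable (fun x => f x • dirac (g x)) := by
  refine measurable_of_measurable_coe _ fun s hs => ?_
  simp only [smul_apply, smul_eq_mul, dirac_apply' _ hs]
  exact hf.mul ((measurable_one.indicator hs).comp hg)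

lemma bind_smul_dirac_add_smul_dirac (ν : Measure α) [IsProbabilityMeasure ν] (x : α)
    {a : α → ℝ≥0∞} (ha : Measurable a) (ha_le : ∀ y, a y ≤ 1) :
    ν.bind (fun y => (1 - a y) • dirac x + a y • dirac y)
      = ν.withDensity a + (1 - ∫⁻ y, a y ∂ν) • dirac x := by
  have h_reject : ∫⁻ y, 1 - a y ∂ν = 1 - ∫⁻ y, a y ∂ν := by
    rw [lintegral_sub ha ?_ (ae_of_all _ ha_le), lintegral_const, measure_univ, one_mul]
    exact ((lintegral_mono ha_le).trans_lt (by simp)).ne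
  have hmeas : Measurable fun y => (1 - a y) • dirac x + a y • dirac y :=
    (measurable_smul_dirac (measurable_const.sub ha) measurable_const).add
      (measurable_smul_dirac ha measurable_id)
  ext s hs
  rw [bind_apply hs hmeas.aemeasurable]
  simp only [add_apply, smul_apply, smul_eq_mul, dirac_apply' _ hs, withDensity_apply _ hs]
  rw [lintegral_add_left (by fun_prop), lintegral_mul_const _ (by fun_prop), h_reject, add_comm,
    ← lintegral_indicator hs]
  congr 1
  refine lintegral_congr fun y => ?_
  by_cases hy : y ∈ s <;> simp [hy]

lemma _root_.ProbabilityTheory.Kernel.snd_compProd_apply_eq_bind (κ : Kernel α β)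
    [IsSFiniteKernel κ] (η : Kernel (α × β) γ) [IsSFiniteKernel η] (a : α) :
    (κ ⊗ₖ η).snd a = (κ a).bind (fun b => η (a, b)) := by
  ext s hs
  rw [Kernel.snd_apply' _ _ hs, Kernel.compProd_apply (measurable_snd hs),
    bind_apply hs (f := fun b => η (a, b)) (η.measurable.comp measurable_prodMk_left).aemeasurable]
  rfl

end MeasureTheory.Measure

section MetropolisHastings

variable {E : Type*} [MeasurableSpace E]

noncomputable def acceptReject (α : E × E → ℝ) : Kernel (E × E) E :=
  (Kernel.deterministic Prod.fst measurable_fst).withDensity (fun z _ => ENNReal.ofReal (1 - α z))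
    + (Kernel.deterministic Prod.snd measurable_snd).withDensity (fun z _ => ENNReal.ofReal (α z))

instance (α : E × E → ℝ) : IsSFiniteKernel (acceptReject α) :=
  have := Kernel.IsSFiniteKernel.withDensity (Kernel.deterministic Prod.fst measurable_fst)
    (f := fun z _ => ENNReal.ofReal (1 - α z)) fun _ _ => ENNReal.ofReal_ne_top
  have := Kernel.IsSFiniteKernel.withDensity (Kernel.deterministic Prod.snd measurable_snd)
    (f := fun z _ => ENNReal.ofReal (α z)) fun _ _ => ENNReal.ofReal_ne_top
  inferInstanceAs (IsSFiniteKernel (_ + _))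

lemma acceptReject_apply {α : E × E → ℝ} (hα : Measurable α) (z : E × E) :
    acceptReject α z =
      ENNReal.ofReal (1 - α z) • Measure.dirac z.1 + ENNReal.ofReal (α z) • Measure.dirac z.2 := by
  rw [acceptReject, FunLike.coe_add, Pi.add_apply, Kernel.withDensity_apply _ (by fun_prop),
    Kernel.withDensity_apply _ (by fun_prop), Kernel.deterministic_apply,
    Kernel.deterministic_apply, withDensity_const, withDensity_const]

lemma acceptReject_comp_compProd (P : Kernel E E) [IsMarkovKernel P] (μ : Measure E)
    [SFinite μ] {α : E × E → ℝ} (hα : Measurable α) (hα0 : ∀ z, 0 ≤ α z) (hα1 : ∀ z, α z ≤ 1) :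
    acceptReject α ∘ₘ (μ ⊗ₘ P) = μ.bind (fun x =>
        ((P x).withDensity (fun y => ENNReal.ofReal (α (x, y))))
          + (1 - ∫⁻ y, ENNReal.ofReal (α (x, y)) ∂(P x)) • Measure.dirac x) := by
  rw [Measure.comp_compProd_eq_snd_comp]
  refine Measure.bind_congr_right (ae_of_all _ fun x => ?_)
  have hsub : ∀ y, ENNReal.ofReal (1 - α (x, y)) = 1 - ENNReal.ofReal (α (x, y)) := fun y => by
    rw [ENNReal.ofReal_sub _ (hα0 _), ENNReal.ofReal_one]
  simp only [Kernel.snd_compProd_apply_eq_bind, acceptReject_apply hα, hsub]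
  exact Measure.bind_smul_dirac_add_smul_dirac _ x (hα.comp measurable_prodMk_left).ennreal_ofReal
    fun y => ENNReal.ofReal_le_one.2 (hα1 _)

end MetropolisHastings

/-- If `μ` is invariant for the Metropolis–Hastings kernel with proposal kernel `P` and
acceptance function `α`, then the augmented measure `μ_aug = μ ⊗ₘ P` on `E × E` is invariant
for the augmented kernel `K_aug((x,y), ·) = (1-α(x,y)) δ_x ⊗ P + α(x,y) δ_y ⊗ P`. -/
theorem augmented_chain_invariant
    {E : Type*} [MeasurableSpace E]
    (P : Kernel E E) [IsMarkovKernel P]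
    (μ : Measure E) [IsProbabilityMeasure μ]
    (α : E × E → ℝ) (hαmeas : Measurable α) (hα0 : ∀ z, 0 ≤ α z) (hα1 : ∀ z, α z ≤ 1)
    (hMH : μ.bind (fun x =>
        ((P x).withDensity (fun y => ENNReal.ofReal (α (x, y))))
          + (1 - ∫⁻ y, ENNReal.ofReal (α (x, y)) ∂(P x)) • Measure.dirac x) = μ) :
    (μ ⊗ₘ P).bind (fun z =>
        ENNReal.ofReal (1 - α z) • ((Measure.dirac z.1) ⊗ₘ P)
          + ENNReal.ofReal (α z) • ((Measure.dirac z.2) ⊗ₘ P)) = μ ⊗ₘ P := by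
  have h_aug : ∀ z : E × E, ENNReal.ofReal (1 - α z) • ((Measure.dirac z.1) ⊗ₘ P)
      + ENNReal.ofReal (α z) • ((Measure.dirac z.2) ⊗ₘ P) = acceptReject α z ⊗ₘ P := fun z => by
    rw [acceptReject_apply hαmeas, Measure.compProd_add_left, Measure.compProd_smul_left,
      Measure.compProd_smul_left]
  simp_rw [h_aug]
  rw [← Measure.compProd_comp_eq_bind, acceptReject_comp_compProd P μ hαmeas hα0 hα1, hMH]
end
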